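/- arXiv:1701.05827 — 3 statements merged into one kernel-verified Lean document; each statement's English description precedes it below -/
import Mathlib

section
/- (Baer–Krull for C-q.o.'s) Let G be an abelian group and v : G → Γ ∪ {∞} a valuation on G. The map sending a C-quasi-order ≾ on G compatible with v to the family (≾_γ)_{γ∈Γ}, where ≾_γ is the q.o. induced by ≾ on G^γ/G_γ, is a bijection from the set of v-compatible C-q.o.'s on G onto the set of families (≾_γ)_{γ∈Γ} of C-q.o.'s on the quotients G^γ/G_γ; its inverse sends a family to its lifting. Moreover, ≾ is v-type (respectively o-type) if and only if each ≾_γ is v-type (respectively o-type). -/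
/-- A total quasi-order: a reflexive, transitive, total binary relation. -/
def IsQO {A : Type*} (q : A → A → Prop) : Prop :=
  Reflexive q ∧ Transitive q ∧ ∀ a b, q a b ∨ q b a

/-- `a ∼ b`: the equivalence associated to a quasi-order. -/
def QOEquiv {A : Type*} (q : A → A → Prop) (a b : A) : Prop := q a b ∧ q b a

/-- A subset `B` is `≾`-convex. -/
def QOConvex {A : Type*} (q : A → A → Prop) (B : Set A) : Prop :=
  ∀ a b c, b ∈ B → c ∈ B → q b a → q a c → a ∈ B

section Group
variable {G : Type*} [AddCommGroup G]

/-- An element `g` is v-type if `g ∼ -g`. -/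
def VType (q : G → G → Prop) (g : G) : Prop := QOEquiv q g (-g)

/-- An element `g` is o-type if `g ≁ -g` or `g = 0`. -/
def OType (q : G → G → Prop) (g : G) : Prop := ¬ QOEquiv q g (-g) ∨ g = 0

/-- A compatible quasi-order on an abelian group: a total q.o. satisfying (Q1) and (Q2). -/
def IsCompatQO (q : G → G → Prop) : Prop :=
  IsQO q ∧ (∀ g, QOEquiv q g 0 → g = 0) ∧
    ∀ x y z : G, q x y → ¬ QOEquiv q y z → q (x + z) (y + z)

/-- Condition (*). -/
def StarCond (q : G → G → Prop) : Prop :=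
  (∀ g, QOEquiv q g 0 → g = 0) ∧
    ∀ f g h : G, q g h → ¬ QOEquiv q h (-f) → q (g + f) (h + f)

/-- A group order: a total, antisymmetric, translation invariant (reflexive transitive) order. -/
def IsGroupOrder (q : G → G → Prop) : Prop :=
  IsQO q ∧ (∀ a b, q a b → q b a → a = b) ∧ ∀ x y z : G, q x y → q (x + z) (y + z)

/-- The relation induced by `q` on the quotient `G ⧸ H`:
`g₁ + H ≾ g₂ + H ↔ ∃ h₁ h₂ ∈ H, g₁ + h₁ ≾ g₂ + h₂`, equivalently there are
representatives `a` of `x` and `b` of `y` with `q a b`. -/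
def IndRel (q : G → G → Prop) (H : AddSubgroup G) : G ⧸ H → G ⧸ H → Prop :=
  fun x y => ∃ a b : G, (a : G ⧸ H) = x ∧ (b : G ⧸ H) = y ∧ q a b

end Group

section Val
variable {G : Type*} [AddCommGroup G] {Γ : Type*} [LinearOrder Γ]

/-- A valuation on an abelian group `G` with values in `Γ ∪ {∞}`. -/
def IsGroupVal (v : G → WithTop Γ) : Prop :=
  (∀ g, v g = ⊤ ↔ g = 0) ∧ ∀ g h, min (v g) (v h) ≤ v (g - h)

theorem IsGroupVal.le_neg {v : G → WithTop Γ} (hv : IsGroupVal v) (a : G) :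
    v a ≤ v (-a) := by
  have h := hv.2 0 a
  rw [zero_sub] at h
  simpa [(hv.1 0).mpr rfl] using h

/-- The subgroup `G^γ = {g | v g ≥ γ}`. -/
def vGge (v : G → WithTop Γ) (hv : IsGroupVal v) (γ : Γ) : AddSubgroup G where
  carrier := {g | (γ : WithTop Γ) ≤ v g}
  zero_mem' := by simp [Set.mem_setOf_eq, (hv.1 0).mpr rfl]
  add_mem' := by
    intro a b ha hb
    have h := hv.2 a (-b)
    rw [sub_neg_eq_add] at h
    exact le_trans (le_min ha (le_trans hb (hv.le_neg b))) h
  neg_mem' := by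
    intro a ha
    exact le_trans ha (hv.le_neg a)

/-- The subgroup `G_γ = {g | v g > γ}`. -/
def vGlt (v : G → WithTop Γ) (hv : IsGroupVal v) (γ : Γ) : AddSubgroup G where
  carrier := {g | (γ : WithTop Γ) < v g}
  zero_mem' := by simp [Set.mem_setOf_eq, (hv.1 0).mpr rfl]
  add_mem' := by
    intro a b ha hb
    have h := hv.2 a (-b)
    rw [sub_neg_eq_add] at h
    exact lt_of_lt_of_le (lt_min ha (lt_of_lt_of_le hb (hv.le_neg b))) h
  neg_mem' := by
    intro a ha
    exact lt_of_lt_of_le ha (hv.le_neg a)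

/-- `v` is compatible with the q.o. `q`: `0 ≾ g ≾ h → v g ≥ v h`. -/
def ValCompat (v : G → WithTop Γ) (q : G → G → Prop) : Prop :=
  ∀ g h : G, q 0 g → q g h → v h ≤ v g

/-- The quotient `G^γ / G_γ`. -/
abbrev vQuot (v : G → WithTop Γ) (hv : IsGroupVal v) (γ : Γ) :=
  (vGge v hv γ) ⧸ ((vGlt v hv γ).addSubgroupOf (vGge v hv γ))

/-- The class `g + G_γ` of an element `g ∈ G^γ` in `G^γ / G_γ`. -/
def vMk (v : G → WithTop Γ) (hv : IsGroupVal v) (γ : Γ) (g : G) (hg : g ∈ vGge v hv γ) :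
    vQuot v hv γ :=
  QuotientAddGroup.mk ⟨g, hg⟩

/-- The q.o. induced by `q` on the quotient `G^γ / G_γ`. -/
def vInd (v : G → WithTop Γ) (hv : IsGroupVal v) (q : G → G → Prop) (γ : Γ) :
    vQuot v hv γ → vQuot v hv γ → Prop :=
  fun x y => ∃ (a b : G) (ha : a ∈ vGge v hv γ) (hb : b ∈ vGge v hv γ),
    vMk v hv γ a ha = x ∧ vMk v hv γ b hb = y ∧ q a b

end Val

/-- A valuation on `G`, bundled with its value set. -/
structure ValuationOn (G : Type u) [AddCommGroup G] : Type (u + 1) where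
  Γ : Type u
  [lo : LinearOrder Γ]
  v : G → WithTop Γ
  top_iff : ∀ g, v g = ⊤ ↔ g = 0
  sub_min : ∀ g h, min (v g) (v h) ≤ v (g - h)

attribute [instance] ValuationOn.lo

/-- A q.o. is valuational if it is induced by some valuation. -/
def IsValuational {G : Type u} [AddCommGroup G] (q : G → G → Prop) : Prop :=
  ∃ V : ValuationOn G, ∀ g h, q g h ↔ V.v h ≤ V.v g

section CRel
variable {G : Type*} [AddCommGroup G]

/-- A compatible C-relation on an abelian group. -/
def IsCRel (C : G → G → G → Prop) : Prop :=
  (∀ x y z, C x y z → C x z y) ∧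
  (∀ x y z, C x y z → ¬ C y x z) ∧
  (∀ w x y z, C x y z → C w y z ∨ C x w z) ∧
  (∀ x y, x ≠ y → C x y y) ∧
  (∀ f g h x, C f g h → C (x + f) (x + g) (x + h))

/-- A C-quasi-order: the q.o. associated to a compatible C-relation. -/
def IsCqo (q : G → G → Prop) : Prop :=
  ∃ C : G → G → G → Prop, IsCRel C ∧ ∀ g h, q g h ↔ ¬ C g h 0

end CRel

section Lift
variable {G : Type u} [AddCommGroup G] {Γ : Type*} [LinearOrder Γ]

/-- The lifting of a family of q.o.'s on the quotients `G^γ/G_γ` to `G`. -/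
def LiftFam (v : G → WithTop Γ) (hv : IsGroupVal v)
    (fam : ∀ γ : Γ, vQuot v hv γ → vQuot v hv γ → Prop) : G → G → Prop :=
  fun g h => (g = 0 ∧ h = 0) ∨
    ∃ (γ : Γ) (_ : (γ : WithTop Γ) = min (v g) (v h)) (hg : g ∈ vGge v hv γ)
      (hh : h ∈ vGge v hv γ), fam γ (vMk v hv γ g hg) (vMk v hv γ h hh)

end Lift

section CqoChar
variable {G : Type*} [AddCommGroup G]

/-- Intrinsic characterization of C-quasi-orders. -/
structure GoodQO (q : G → G → Prop) : Prop where
  refl : ∀ g, q g g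
  trans : ∀ a b c, q a b → q b c → q a c
  total : ∀ a b, q a b ∨ q b a
  zmin : ∀ g, q 0 g
  zrig : ∀ g, q g 0 → g = 0
  dag : ∀ g h, q h g → ¬ q g h → q (-h) (g - h) ∧ ¬ q (g - h) (-h)

theorem good_of_cqo {q : G → G → Prop} (h : IsCqo q) : GoodQO q := by
  obtain ⟨C, ⟨c1, c2, c3, c4, c5⟩, hq⟩ := h
  constructor
  · intro g
    rw [hq]
    intro hC
    exact c2 _ _ _ hC hC
  · intro a b c hab hbc
    rw [hq] at *
    intro hC
    rcases c3 b a c 0 hC with h' | h'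
    · exact hbc h'
    · exact hab h'
  · intro a b
    by_contra hcon
    push_neg at hcon
    obtain ⟨h1, h2⟩ := hcon
    rw [hq, not_not] at h1 h2
    exact c2 _ _ _ h1 h2
  · intro g
    rw [hq]
    intro hC
    exact c2 _ _ _ (c1 _ _ _ hC) (c1 _ _ _ hC)
  · intro g hg
    rw [hq] at hg
    by_contra hne
    exact hg (c4 _ _ hne)
  · intro g h hhg hgh
    rw [hq] at hhg hgh
    rw [not_not] at hgh
    constructor
    · rw [hq]
      intro hC
      have h1 : C 0 g h := by
        have := c5 _ _ _ h hC
        simpa using this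
      exact c2 _ _ _ h1 (c1 _ _ _ hgh)
    · rw [hq, not_not]
      have := c5 _ _ _ (-h) (c1 _ _ _ hgh)
      simpa [neg_add_eq_sub, ← sub_eq_neg_add] using this

theorem star_of_cqo {q : G → G → Prop} (h : IsCqo q) :
    ∀ g h' f : G, q g h' → ¬ (q h' (-f) ∧ q (-f) h') → q (g + f) (h' + f) := by
  obtain ⟨C, ⟨c1, c2, c3, c4, c5⟩, hq⟩ := h
  intro g h f hgh hne
  rw [hq] at hgh ⊢
  intro hC
  have hght : C g h (-f) := by
    have := c5 _ _ _ (-f) hC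
    simpa [neg_add_cancel_left] using this
  have hor : C h (-f) 0 ∨ C (-f) h 0 := by
    by_contra hcon
    push_neg at hcon
    rw [← hq, ← hq] at hcon
    exact hne ⟨hcon.1, hcon.2⟩
  have hgth : C g (-f) h := c1 _ _ _ hght
  rcases c3 0 g (-f) h hgth with h0 | h0
  · rcases hor with h' | h'
    · exact c2 _ _ _ (c1 _ _ _ h0) (c1 _ _ _ h')
    · exact c2 _ _ _ h0 (c1 _ _ _ h')
  · exact hgh (c1 _ _ _ h0)

theorem cqo_of_good {q : G → G → Prop} (h : GoodQO q) : IsCqo q := by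
  classical
  refine ⟨fun x y z => (q (y - z) (x - z) ∧ ¬ q (x - z) (y - z)) ∧
      (q (z - y) (x - y) ∧ ¬ q (x - y) (z - y)), ⟨?_, ?_, ?_, ?_, ?_⟩, ?_⟩
  · rintro x y z ⟨h1, h2⟩
    exact ⟨h2, h1⟩
  · rintro x y z ⟨⟨h1, h2⟩, -⟩ ⟨⟨h3, -⟩, -⟩
    exact h2 h3
  · rintro w x y z ⟨⟨h1, h2⟩, -⟩
    by_cases hw : q (w - z) (y - z)
    · right
      have hwx : q (w - z) (x - z) := h.trans _ _ _ hw h1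
      have hxw : ¬ q (x - z) (w - z) := fun hc => h2 (h.trans _ _ _ hc hw)
      refine ⟨⟨hwx, hxw⟩, ?_⟩
      have := h.dag _ _ hwx hxw
      rw [neg_sub, sub_sub_sub_cancel_right] at this
      exact this
    · left
      have hyw : q (y - z) (w - z) := (h.total _ _).resolve_left hw
      refine ⟨⟨hyw, hw⟩, ?_⟩
      have := h.dag _ _ hyw hw
      rw [neg_sub, sub_sub_sub_cancel_right] at this
      exact this
  · intro x y hxy
    have h0 : q 0 (x - y) := h.zmin _
    have h0' : ¬ q (x - y) 0 := fun hc => hxy (sub_eq_zero.mp (h.zrig _ hc))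
    refine ⟨⟨by simpa using h0, by simpa using h0'⟩, ⟨by simpa using h0, by simpa using h0'⟩⟩
  · intro f g h' x hfgh
    simpa [add_sub_add_left_eq_sub] using hfgh
  · intro g h'
    constructor
    · intro hgh hC
      obtain ⟨⟨h1, h2⟩, -⟩ := hC
      rw [sub_zero, sub_zero] at h1 h2
      exact h2 hgh
    · intro hC
      by_contra hgh
      have hhg : q h' g := (h.total _ _).resolve_left hgh
      refine hC ⟨⟨by simpa using hhg, by simpa using hgh⟩, ?_⟩
      have := h.dag g h' hhg hgh
      simpa using this

end CqoChar
section BKAux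
variable {G : Type u} [AddCommGroup G] {Γ : Type*} [LinearOrder Γ]
variable {v : G → WithTop Γ}

theorem val_zero (hv : IsGroupVal v) : v 0 = ⊤ := (hv.1 0).mpr rfl

theorem val_neg (hv : IsGroupVal v) (a : G) : v (-a) = v a := by
  refine le_antisymm ?_ (hv.le_neg a)
  have := hv.le_neg (-a)
  rwa [neg_neg] at this

theorem val_add_big (hv : IsGroupVal v) {g d : G} (h : v g < v d) : v (g + d) = v g := by
  refine le_antisymm ?_ ?_
  · by_contra hlt
    push_neg at hlt
    have h2 := hv.2 (g + d) d
    rw [add_sub_cancel_right] at h2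
    exact absurd h2 (not_le.mpr (lt_min hlt h))
  · have h1 := hv.2 g (-d)
    rw [sub_neg_eq_add, val_neg hv] at h1
    exact le_trans (le_min le_rfl h.le) h1

theorem mem_vGge (hv : IsGroupVal v) {γ : Γ} {g : G} :
    g ∈ vGge v hv γ ↔ (γ : WithTop Γ) ≤ v g := Iff.rfl

theorem vMk_eq_iff (hv : IsGroupVal v) {γ : Γ} {a b : G} {ha : a ∈ vGge v hv γ}
    {hb : b ∈ vGge v hv γ} :
    vMk v hv γ a ha = vMk v hv γ b hb ↔ (γ : WithTop Γ) < v (b - a) := by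
  rw [vMk, vMk, QuotientAddGroup.eq, AddSubgroup.mem_addSubgroupOf]
  show (-a + b) ∈ vGlt v hv γ ↔ _
  rw [neg_add_eq_sub]
  exact Iff.rfl

theorem vMk_zero (hv : IsGroupVal v) (γ : Γ) (h0 : (0 : G) ∈ vGge v hv γ) :
    vMk v hv γ 0 h0 = 0 := rfl

theorem vMk_eq_zero_iff (hv : IsGroupVal v) {γ : Γ} {a : G} {ha : a ∈ vGge v hv γ} :
    vMk v hv γ a ha = 0 ↔ (γ : WithTop Γ) < v a := by
  have h0 : (0 : G) ∈ vGge v hv γ := (vGge v hv γ).zero_mem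
  rw [← vMk_zero hv γ h0, eq_comm, vMk_eq_iff hv, sub_zero]

theorem vMk_neg (hv : IsGroupVal v) {γ : Γ} {a : G} {ha : a ∈ vGge v hv γ}
    {hna : -a ∈ vGge v hv γ} : vMk v hv γ (-a) hna = - vMk v hv γ a ha := rfl

theorem vMk_sub (hv : IsGroupVal v) {γ : Γ} {a b : G} {ha : a ∈ vGge v hv γ}
    {hb : b ∈ vGge v hv γ} {hab : a - b ∈ vGge v hv γ} :
    vMk v hv γ (a - b) hab = vMk v hv γ a ha - vMk v hv γ b hb := rfl

theorem vQuot_ind (hv : IsGroupVal v) {γ : Γ} {P : vQuot v hv γ → Prop}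
    (H : ∀ a (ha : a ∈ vGge v hv γ), P (vMk v hv γ a ha)) : ∀ x, P x := by
  intro x
  induction x using QuotientAddGroup.induction_on with
  | H s => exact H s.1 s.2

end BKAux
section PartA
variable {G : Type u} [AddCommGroup G] {Γ : Type*} [LinearOrder Γ]
variable {v : G → WithTop Γ} {q : G → G → Prop}

/-- Star condition as provided by `star_of_cqo`. -/
def StarProp (q : G → G → Prop) : Prop :=
  ∀ g h' f : G, q g h' → ¬ (q h' (-f) ∧ q (-f) h') → q (g + f) (h' + f)

theorem val_anti (hv : IsGroupVal v) (hg : GoodQO q) (hcomp : ValCompat v q) :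
    ∀ a b : G, q a b → v b ≤ v a :=
  fun a b hab => hcomp a b (hg.zmin a) hab

theorem sim_of_big (hv : IsGroupVal v) (hg : GoodQO q) (hstar : StarProp q)
    (hcomp : ValCompat v q) {g d : G} (h : v g < v d) : q g (g + d) ∧ q (g + d) g := by
  have hva := val_anti hv hg hcomp
  have hgd : v (g + d) = v g := val_add_big hv h
  constructor
  · have h1 : q (0 + g) (d + g) := by
      refine hstar 0 d g (hg.zmin d) ?_
      rintro ⟨-, h2⟩
      have := hva _ _ h2
      rw [val_neg hv] at this
      exact absurd h (not_lt.mpr this)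
    rwa [zero_add, add_comm d g] at h1
  · have h1 : q (0 + (g + d)) (-d + (g + d)) := by
      refine hstar 0 (-d) (g + d) (hg.zmin (-d)) ?_
      rintro ⟨-, h2⟩
      have := hva _ _ h2
      rw [val_neg hv, val_neg hv, hgd] at this
      exact absurd (lt_of_lt_of_le h this) (lt_irrefl _)
    have e1 : (0 : G) + (g + d) = g + d := zero_add _
    have e2 : -d + (g + d) = g := by abel
    rwa [e1, e2] at h1

theorem sim_of_big' (hv : IsGroupVal v) (hg : GoodQO q) (hstar : StarProp q)
    (hcomp : ValCompat v q) {a a' : G} (h : v a < v (a' - a)) : q a a' ∧ q a' a := by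
  have := sim_of_big hv hg hstar hcomp h
  have e : a + (a' - a) = a' := by abel
  rwa [e] at this

/-- Key description of the induced relation on the quotient. -/
theorem keyX (hv : IsGroupVal v) (hg : GoodQO q) (hstar : StarProp q)
    (hcomp : ValCompat v q) (γ : Γ) {a b : G} (ha : a ∈ vGge v hv γ) (hb : b ∈ vGge v hv γ) :
    vInd v hv q γ (vMk v hv γ a ha) (vMk v hv γ b hb) ↔
      (q a b ∨ (γ : WithTop Γ) < v a) := by
  have hva := val_anti hv hg hcomp
  constructor
  · rintro ⟨a₀, b₀, ha₀, hb₀, ea, eb, hab⟩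
    by_cases hlt : (γ : WithTop Γ) < v a
    · exact Or.inr hlt
    left
    have hvaγ : v a = (γ : WithTop Γ) := le_antisymm (not_lt.mp hlt) ha
    rw [vMk_eq_iff hv] at ea eb
    have haa₀ : q a a₀ ∧ q a₀ a := by
      refine sim_of_big' hv hg hstar hcomp ?_
      rw [hvaγ]
      have : v (a₀ - a) = v (a - a₀) := by rw [← neg_sub, val_neg hv]
      rw [this]
      exact ea
    have hvaa₀ : v a₀ = v a := le_antisymm (hva _ _ haa₀.1) (hva _ _ haa₀.2)
    by_cases hltb : (γ : WithTop Γ) < v b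
    · exfalso
      have hvb₀ : (γ : WithTop Γ) < v b₀ := by
        have h2 := hv.2 b (b - b₀)
        have e : b - (b - b₀) = b₀ := by abel
        rw [e] at h2
        exact lt_of_lt_of_le (lt_min hltb eb) h2
      have := hva _ _ hab
      rw [hvaa₀, hvaγ] at this
      exact absurd (lt_of_lt_of_le hvb₀ this) (lt_irrefl _)
    have hvbγ : v b = (γ : WithTop Γ) := le_antisymm (not_lt.mp hltb) hb
    have hbb₀ : q b b₀ ∧ q b₀ b := by
      refine sim_of_big' hv hg hstar hcomp ?_
      rw [hvbγ]
      have : v (b₀ - b) = v (b - b₀) := by rw [← neg_sub, val_neg hv]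
      rw [this]
      exact eb
    exact hg.trans _ _ _ (hg.trans _ _ _ haa₀.1 hab) hbb₀.2
  · rintro (hab | hlt)
    · exact ⟨a, b, ha, hb, rfl, rfl, hab⟩
    · refine ⟨0, b, (vGge v hv γ).zero_mem, hb, ?_, rfl, hg.zmin b⟩
      rw [vMk_eq_iff hv, sub_zero]
      exact hlt

theorem good_ind (hv : IsGroupVal v) (hg : GoodQO q) (hstar : StarProp q)
    (hcomp : ValCompat v q) (γ : Γ) : GoodQO (vInd v hv q γ) := by
  have X : ∀ (a b : G) (ha : a ∈ vGge v hv γ) (hb : b ∈ vGge v hv γ),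
      vInd v hv q γ (vMk v hv γ a ha) (vMk v hv γ b hb) ↔
        (q a b ∨ (γ : WithTop Γ) < v a) := fun a b ha hb => keyX hv hg hstar hcomp γ ha hb
  have hva := val_anti hv hg hcomp
  constructor
  · refine vQuot_ind hv fun a ha => ?_
    exact (X _ _ ha ha).mpr (Or.inl (hg.refl a))
  · refine vQuot_ind hv fun a ha => vQuot_ind hv fun b hb => vQuot_ind hv fun c hc => ?_
    intro h1 h2
    rw [X _ _ ha hb] at h1
    rw [X _ _ hb hc] at h2
    rw [X _ _ ha hc]
    rcases h1 with h1 | h1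
    · rcases h2 with h2 | h2
      · exact Or.inl (hg.trans _ _ _ h1 h2)
      · exact Or.inr (lt_of_lt_of_le h2 (hva _ _ h1))
    · exact Or.inr h1
  · refine vQuot_ind hv fun a ha => vQuot_ind hv fun b hb => ?_
    rw [X _ _ ha hb, X _ _ hb ha]
    rcases hg.total a b with h | h
    · exact Or.inl (Or.inl h)
    · exact Or.inr (Or.inl h)
  · refine vQuot_ind hv fun a ha => ?_
    rw [show (0 : vQuot v hv γ) = vMk v hv γ 0 (vGge v hv γ).zero_mem from rfl,
      X _ _ (vGge v hv γ).zero_mem ha]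
    exact Or.inl (hg.zmin a)
  · refine vQuot_ind hv fun a ha => ?_
    intro h1
    rw [show (0 : vQuot v hv γ) = vMk v hv γ 0 (vGge v hv γ).zero_mem from rfl,
      X _ _ ha (vGge v hv γ).zero_mem] at h1
    rcases h1 with h1 | h1
    · have : a = 0 := hg.zrig a h1
      subst this
      rfl
    · exact (vMk_eq_zero_iff hv).mpr h1
  · refine vQuot_ind hv fun a ha => vQuot_ind hv fun b hb => ?_
    intro hba hab
    rw [X _ _ hb ha] at hba
    rw [X _ _ ha hb] at hab
    push_neg at hab
    obtain ⟨hnab, hnlta⟩ := hab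
    have hvaγ : v a = (γ : WithTop Γ) := le_antisymm hnlta ha
    have hnb : -b ∈ vGge v hv γ := (vGge v hv γ).neg_mem hb
    have hamb : a - b ∈ vGge v hv γ := (vGge v hv γ).sub_mem ha hb
    rw [← vMk_neg hv (ha := hb) (hna := hnb), ← vMk_sub hv (ha := ha) (hb := hb) (hab := hamb),
      X _ _ hnb hamb, X _ _ hamb hnb]
    by_cases hltb : (γ : WithTop Γ) < v b
    · constructor
      · refine Or.inr ?_
        rwa [val_neg hv]
      · have hvab : v (a - b) = v a := by
          rw [sub_eq_add_neg]
          refine val_add_big hv ?_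
          rw [val_neg hv, hvaγ]
          exact hvaγ ▸ hltb
        push_neg
        refine ⟨?_, ?_⟩
        · intro hc
          have := hva _ _ hc
          rw [val_neg hv, hvab, hvaγ] at this
          exact absurd (lt_of_lt_of_le hltb this) (lt_irrefl _)
        · rw [hvab, hvaγ]
    · have hvbγ : v b = (γ : WithTop Γ) := le_antisymm (not_lt.mp hltb) hb
      have hqba : q b a := by
        rcases hba with h | h
        · exact h
        · exact absurd (hvbγ ▸ h) (lt_irrefl _)
      have hdag := hg.dag a b hqba hnab
      have hvabγ : v (a - b) = (γ : WithTop Γ) := by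
        refine le_antisymm ?_ hamb
        by_contra hc
        push_neg at hc
        have hs : q b a ∧ q a b := by
          refine sim_of_big' hv hg hstar hcomp (a := b) (a' := a) ?_
          rw [hvbγ]
          exact hc
        exact hnab hs.2
      constructor
      · exact Or.inl hdag.1
      · push_neg
        refine ⟨hdag.2, ?_⟩
        rw [hvabγ]

end PartA
section PartA2
variable {G : Type u} [AddCommGroup G] {Γ : Type*} [LinearOrder Γ]
variable {v : G → WithTop Γ} {q : G → G → Prop}

theorem q_of_val_lt (hv : IsGroupVal v) (hg : GoodQO q) (hcomp : ValCompat v q)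
    {g h : G} (hlt : v h < v g) : q g h :=
  (hg.total g h).resolve_right fun hc =>
    absurd (val_anti hv hg hcomp _ _ hc) (not_le.mpr hlt)

theorem lift_ind_eq (hv : IsGroupVal v) (hg : GoodQO q) (hstar : StarProp q)
    (hcomp : ValCompat v q) : LiftFam v hv (fun γ => vInd v hv q γ) = q := by
  funext g h
  apply propext
  constructor
  · rintro (⟨hg0, hh0⟩ | ⟨γ, hγ, hgm, hhm, hind⟩)
    · subst hg0; subst hh0; exact hg.refl 0
    · rw [keyX hv hg hstar hcomp γ hgm hhm] at hind
      rcases hind with h1 | h1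
      · exact h1
      · refine q_of_val_lt hv hg hcomp ?_
        rcases le_total (v g) (v h) with hc | hc
        · exact absurd (hγ ▸ h1) (by rw [min_eq_left hc]; exact lt_irrefl _)
        · exact lt_of_le_of_lt (le_of_eq (min_eq_right hc).symm) (hγ ▸ h1)
  · intro hq
    by_cases h0 : min (v g) (v h) = ⊤
    · left
      have hvg : v g = ⊤ := le_antisymm le_top (le_trans (le_of_eq h0.symm) (min_le_left _ _))
      have hvh : v h = ⊤ := le_antisymm le_top (le_trans (le_of_eq h0.symm) (min_le_right _ _))
      exact ⟨(hv.1 g).mp hvg, (hv.1 h).mp hvh⟩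
    · right
      obtain ⟨γ, hγ⟩ := WithTop.ne_top_iff_exists.mp h0
      have hgm : g ∈ vGge v hv γ := le_trans (le_of_eq hγ) (min_le_left _ _)
      have hhm : h ∈ vGge v hv γ := le_trans (le_of_eq hγ) (min_le_right _ _)
      exact ⟨γ, hγ, hgm, hhm, (keyX hv hg hstar hcomp γ hgm hhm).mpr (Or.inl hq)⟩

theorem vtype_iff (hv : IsGroupVal v) (hg : GoodQO q) (hstar : StarProp q)
    (hcomp : ValCompat v q) :
    (∀ g : G, VType q g) ↔ ∀ (γ : Γ) (x : vQuot v hv γ), VType (vInd v hv q γ) x := by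
  constructor
  · intro H γ
    refine vQuot_ind hv fun a ha => ?_
    have hna : -a ∈ vGge v hv γ := (vGge v hv γ).neg_mem ha
    refine ⟨?_, ?_⟩
    · rw [← vMk_neg hv (ha := ha) (hna := hna), keyX hv hg hstar hcomp γ ha hna]
      exact Or.inl (H a).1
    · rw [← vMk_neg hv (ha := ha) (hna := hna), keyX hv hg hstar hcomp γ hna ha]
      exact Or.inl (H a).2
  · intro H g
    by_cases hg0 : g = 0
    · subst hg0
      constructor <;> (rw [neg_zero]; exact hg.refl 0)
    · have hne : v g ≠ ⊤ := fun hc => hg0 ((hv.1 g).mp hc)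
      obtain ⟨γ, hγ⟩ := WithTop.ne_top_iff_exists.mp hne
      have ha : g ∈ vGge v hv γ := le_of_eq hγ
      have hna : -g ∈ vGge v hv γ := (vGge v hv γ).neg_mem ha
      obtain ⟨h1, h2⟩ := H γ (vMk v hv γ g ha)
      rw [← vMk_neg hv (ha := ha) (hna := hna), keyX hv hg hstar hcomp γ ha hna] at h1
      rw [← vMk_neg hv (ha := ha) (hna := hna), keyX hv hg hstar hcomp γ hna ha] at h2
      have hnlt : ¬ (γ : WithTop Γ) < v g := by rw [← hγ]; exact lt_irrefl _
      have hnlt' : ¬ (γ : WithTop Γ) < v (-g) := by rw [val_neg hv]; exact hnlt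
      exact ⟨h1.resolve_right hnlt, h2.resolve_right hnlt'⟩

theorem otype_iff (hv : IsGroupVal v) (hg : GoodQO q) (hstar : StarProp q)
    (hcomp : ValCompat v q) :
    (∀ g : G, OType q g) ↔ ∀ (γ : Γ) (x : vQuot v hv γ), OType (vInd v hv q γ) x := by
  constructor
  · intro H γ
    refine vQuot_ind hv fun a ha => ?_
    by_cases hlt : (γ : WithTop Γ) < v a
    · exact Or.inr ((vMk_eq_zero_iff hv).mpr hlt)
    · left
      have ha0 : a ≠ 0 := by
        intro hc
        subst hc
        exact hlt (lt_of_lt_of_le (lt_top_iff_ne_top.mpr (WithTop.coe_ne_top))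
          (le_of_eq (val_zero hv).symm))
      have hnv : ¬ QOEquiv q a (-a) := (H a).resolve_right ha0
      rintro ⟨h1, h2⟩
      have hna : -a ∈ vGge v hv γ := (vGge v hv γ).neg_mem ha
      rw [← vMk_neg hv (ha := ha) (hna := hna), keyX hv hg hstar hcomp γ ha hna] at h1
      rw [← vMk_neg hv (ha := ha) (hna := hna), keyX hv hg hstar hcomp γ hna ha] at h2
      have hnlt' : ¬ (γ : WithTop Γ) < v (-a) := by rw [val_neg hv]; exact hlt
      exact hnv ⟨h1.resolve_right hlt, h2.resolve_right hnlt'⟩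
  · intro H g
    by_cases hg0 : g = 0
    · exact Or.inr hg0
    · left
      have hne : v g ≠ ⊤ := fun hc => hg0 ((hv.1 g).mp hc)
      obtain ⟨γ, hγ⟩ := WithTop.ne_top_iff_exists.mp hne
      have ha : g ∈ vGge v hv γ := le_of_eq hγ
      have hna : -g ∈ vGge v hv γ := (vGge v hv γ).neg_mem ha
      have hnlt : ¬ (γ : WithTop Γ) < v g := by rw [← hγ]; exact lt_irrefl _
      rintro ⟨h1, h2⟩
      rcases H γ (vMk v hv γ g ha) with hno | hzero
      · refine hno ?_
        constructor
        · rw [← vMk_neg hv (ha := ha) (hna := hna), keyX hv hg hstar hcomp γ ha hna]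
          exact Or.inl h1
        · rw [← vMk_neg hv (ha := ha) (hna := hna), keyX hv hg hstar hcomp γ hna ha]
          exact Or.inl h2
      · exact hnlt ((vMk_eq_zero_iff hv).mp hzero)

end PartA2
section PartB
variable {G : Type u} [AddCommGroup G] {Γ : Type*} [LinearOrder Γ]
variable {v : G → WithTop Γ}

theorem lift_val (hv : IsGroupVal v) {fam : ∀ γ : Γ, vQuot v hv γ → vQuot v hv γ → Prop}
    (hfam : ∀ γ, GoodQO (fam γ)) {g h : G} (hL : LiftFam v hv fam g h) : v h ≤ v g := by
  rcases hL with ⟨hg0, hh0⟩ | ⟨γ, hγ, hgm, hhm, hf⟩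
  · subst hg0; subst hh0; exact le_rfl
  · by_contra hc
    push_neg at hc
    have hvg : v g = (γ : WithTop Γ) := (hγ.trans (min_eq_left hc.le)).symm
    have hzero : vMk v hv γ h hhm = 0 := (vMk_eq_zero_iff hv).mpr (hvg ▸ hc)
    rw [hzero] at hf
    have h2 := (hfam γ).zrig _ hf
    rw [vMk_eq_zero_iff hv, hvg] at h2
    exact lt_irrefl _ h2

theorem lift_zmin (hv : IsGroupVal v) {fam : ∀ γ : Γ, vQuot v hv γ → vQuot v hv γ → Prop}
    (hfam : ∀ γ, GoodQO (fam γ)) (h : G) : LiftFam v hv fam 0 h := by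
  by_cases hh0 : h = 0
  · exact Or.inl ⟨rfl, hh0⟩
  · right
    have hne : v h ≠ ⊤ := fun hc => hh0 ((hv.1 h).mp hc)
    obtain ⟨γ, hγ⟩ := WithTop.ne_top_iff_exists.mp hne
    have hhm : h ∈ vGge v hv γ := le_of_eq hγ
    have h0m : (0 : G) ∈ vGge v hv γ := (vGge v hv γ).zero_mem
    refine ⟨γ, ?_, h0m, hhm, ?_⟩
    · rw [val_zero hv]
      exact hγ.trans (min_eq_right le_top).symm
    · exact (hfam γ).zmin _

theorem lift_zrig (hv : IsGroupVal v) {fam : ∀ γ : Γ, vQuot v hv γ → vQuot v hv γ → Prop}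
    (hfam : ∀ γ, GoodQO (fam γ)) {g : G} (hL : LiftFam v hv fam g 0) : g = 0 := by
  rcases hL with ⟨hg0, -⟩ | ⟨γ, hγ, hgm, h0m, hf⟩
  · exact hg0
  · have hvg : v g = (γ : WithTop Γ) := by
      rw [val_zero hv] at hγ
      exact (hγ.trans (min_eq_left le_top)).symm
    have h2 := (hfam γ).zrig _ hf
    rw [vMk_eq_zero_iff hv, hvg] at h2
    exact absurd h2 (lt_irrefl _)

theorem good_lift (hv : IsGroupVal v) {fam : ∀ γ : Γ, vQuot v hv γ → vQuot v hv γ → Prop}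
    (hfam : ∀ γ, GoodQO (fam γ)) : GoodQO (LiftFam v hv fam) := by
  constructor
  · intro g
    by_cases hg0 : g = 0
    · exact Or.inl ⟨hg0, hg0⟩
    · right
      have hne : v g ≠ ⊤ := fun hc => hg0 ((hv.1 g).mp hc)
      obtain ⟨γ, hγ⟩ := WithTop.ne_top_iff_exists.mp hne
      have hgm : g ∈ vGge v hv γ := le_of_eq hγ
      exact ⟨γ, hγ.trans (min_self _).symm, hgm, hgm, (hfam γ).refl _⟩
  · intro a b c hab hbc
    have hba := lift_val hv hfam hab
    have hcb := lift_val hv hfam hbc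
    rcases hab with ⟨ha0, hb0⟩ | ⟨γ₁, hγ₁, ham, hbm, hf1⟩
    · subst ha0; subst hb0; exact hbc
    rcases hbc with ⟨hb0, hc0⟩ | ⟨γ₂, hγ₂, hbm2, hcm, hf2⟩
    · subst hb0; subst hc0; exact Or.inr ⟨γ₁, hγ₁, ham, hbm, hf1⟩
    right
    have hγ₂' : (γ₂ : WithTop Γ) = v c := hγ₂.trans (min_eq_right hcb)
    have hca : v c ≤ v a := le_trans hcb hba
    have hcmγ : c ∈ vGge v hv γ₂ := le_of_eq hγ₂'
    have hamγ : a ∈ vGge v hv γ₂ := le_trans (le_of_eq hγ₂') hca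
    refine ⟨γ₂, hγ₂'.trans (min_eq_right hca).symm, hamγ, hcmγ, ?_⟩
    by_cases hlt : (γ₂ : WithTop Γ) < v a
    · rw [(vMk_eq_zero_iff hv).mpr hlt]
      exact (hfam γ₂).zmin _
    · have hvaγ : v a = (γ₂ : WithTop Γ) := le_antisymm (not_lt.mp hlt) hamγ
      have hvbγ : v b = (γ₂ : WithTop Γ) :=
        le_antisymm (hvaγ ▸ hba) (le_trans (le_of_eq hγ₂') hcb)
      have hγγ : γ₁ = γ₂ := by
        have : (γ₁ : WithTop Γ) = (γ₂ : WithTop Γ) := by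
          rw [hγ₁, min_eq_right hba, hvbγ]
        exact_mod_cast this
      subst hγγ
      exact (hfam γ₁).trans _ _ _ hf1 hf2
  · intro a b
    by_cases hm : min (v a) (v b) = ⊤
    · have hva : v a = ⊤ := le_antisymm le_top (le_trans (le_of_eq hm.symm) (min_le_left _ _))
      have hvb : v b = ⊤ := le_antisymm le_top (le_trans (le_of_eq hm.symm) (min_le_right _ _))
      exact Or.inl (Or.inl ⟨(hv.1 a).mp hva, (hv.1 b).mp hvb⟩)
    · obtain ⟨γ, hγ⟩ := WithTop.ne_top_iff_exists.mp hm
      have ham : a ∈ vGge v hv γ := le_trans (le_of_eq hγ) (min_le_left _ _)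
      have hbm : b ∈ vGge v hv γ := le_trans (le_of_eq hγ) (min_le_right _ _)
      rcases (hfam γ).total (vMk v hv γ a ham) (vMk v hv γ b hbm) with h | h
      · exact Or.inl (Or.inr ⟨γ, hγ, ham, hbm, h⟩)
      · exact Or.inr (Or.inr ⟨γ, hγ.trans (min_comm _ _), hbm, ham, h⟩)
  · exact lift_zmin hv hfam
  · intro g hL
    exact lift_zrig hv hfam hL
  · intro g h hhg hngh
    by_cases hh0 : h = 0
    · subst hh0
      rw [neg_zero, sub_zero]
      refine ⟨hhg, ?_⟩
      intro hc
      have := lift_zrig hv hfam hc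
      subst this
      exact hngh (Or.inl ⟨rfl, rfl⟩)
    have hg0 : g ≠ 0 := by
      intro hc
      subst hc
      exact hh0 (lift_zrig hv hfam hhg)
    have hvgh : v g ≤ v h := lift_val hv hfam hhg
    have hneg : v g ≠ ⊤ := fun hc => hg0 ((hv.1 g).mp hc)
    obtain ⟨γ, hγg⟩ := WithTop.ne_top_iff_exists.mp hneg
    have hgm : g ∈ vGge v hv γ := le_of_eq hγg
    have hhm : h ∈ vGge v hv γ := le_trans (le_of_eq hγg) hvgh
    have hnhm : -h ∈ vGge v hv γ := (vGge v hv γ).neg_mem hhm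
    have hghm : g - h ∈ vGge v hv γ := (vGge v hv γ).sub_mem hgm hhm
    have hf : fam γ (vMk v hv γ h hhm) (vMk v hv γ g hgm) := by
      rcases hhg with ⟨hh0', -⟩ | ⟨δ, hδ, h1m, h2m, hf⟩
      · exact absurd hh0' hh0
      · have : δ = γ := by
          have : (δ : WithTop Γ) = (γ : WithTop Γ) := by
            rw [hδ, min_eq_right hvgh, hγg]
          exact_mod_cast this
        subst this
        exact hf
    have hnf : ¬ fam γ (vMk v hv γ g hgm) (vMk v hv γ h hhm) := by
      intro hc
      exact hngh (Or.inr ⟨γ, hγg.trans (min_eq_left hvgh).symm, hgm, hhm, hc⟩)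
    have hvnh : v (-h) = v h := val_neg hv h
    by_cases hlt : (γ : WithTop Γ) < v h
    · have hvgh2 : v (g - h) = v g := by
        rw [sub_eq_add_neg]
        refine val_add_big hv ?_
        rw [hvnh, ← hγg]
        exact hlt
      constructor
      · refine Or.inr ⟨γ, ?_, hnhm, hghm, ?_⟩
        · rw [hvnh, hvgh2, min_eq_right (hγg ▸ hlt.le), hγg]
        · rw [(vMk_eq_zero_iff hv).mpr (hvnh ▸ hlt)]
          exact (hfam γ).zmin _
      · intro hc
        rcases hc with ⟨-, he2⟩ | ⟨δ, hδ, h1m, h2m, hfc⟩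
        · exact hh0 (neg_eq_zero.mp he2)
        · have hfc' : fam γ (vMk v hv γ (g - h) hghm) (vMk v hv γ (-h) hnhm) := by
            have hδγ : δ = γ := by
              have h3 : (δ : WithTop Γ) = (γ : WithTop Γ) := by
                rw [hδ, hvnh, hvgh2, min_eq_left hvgh, ← hγg]
              exact_mod_cast h3
            subst hδγ
            exact hfc
          rw [(vMk_eq_zero_iff hv).mpr
            (show (γ : WithTop Γ) < v (-h) by rw [hvnh]; exact hlt)] at hfc'
          have h2 := (hfam γ).zrig _ hfc'
          rw [vMk_eq_zero_iff hv, hvgh2, ← hγg] at h2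
          exact lt_irrefl _ h2
    · have hvhγ : v h = (γ : WithTop Γ) := le_antisymm (not_lt.mp hlt) hhm
      have hd := (hfam γ).dag _ _ hf hnf
      have hvghγ : v (g - h) = (γ : WithTop Γ) := by
        refine le_antisymm ?_ hghm
        by_contra hc
        push_neg at hc
        have he : vMk v hv γ g hgm = vMk v hv γ h hhm := by
          rw [vMk_eq_iff hv]
          have : v (h - g) = v (g - h) := by rw [← neg_sub, val_neg hv]
          rw [this]
          exact hc
        exact hnf (he ▸ (hfam γ).refl _)
      constructor
      · refine Or.inr ⟨γ, ?_, hnhm, hghm, ?_⟩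
        · rw [hvnh, hvhγ, hvghγ, min_self]
        · rw [vMk_neg hv (ha := hhm) (hna := hnhm),
            vMk_sub hv (ha := hgm) (hb := hhm) (hab := hghm)]
          exact hd.1
      · intro hc
        rcases hc with ⟨-, he2⟩ | ⟨δ, hδ, h1m, h2m, hfc⟩
        · exact hh0 (neg_eq_zero.mp he2)
        · have hfc' : fam γ (vMk v hv γ (g - h) hghm) (vMk v hv γ (-h) hnhm) := by
            have hδγ : δ = γ := by
              have h3 : (δ : WithTop Γ) = (γ : WithTop Γ) := by
                rw [hδ, hvnh, hvhγ, hvghγ, min_self]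
              exact_mod_cast h3
            subst hδγ
            exact hfc
          rw [vMk_neg hv (ha := hhm) (hna := hnhm),
            vMk_sub hv (ha := hgm) (hb := hhm) (hab := hghm)] at hfc'
          exact hd.2 hfc'

end PartB
section PartB2
variable {G : Type u} [AddCommGroup G] {Γ : Type*} [LinearOrder Γ]
variable {v : G → WithTop Γ}

theorem vInd_lift_eq (hv : IsGroupVal v) {fam : ∀ γ : Γ, vQuot v hv γ → vQuot v hv γ → Prop}
    (hfam : ∀ γ, GoodQO (fam γ)) (γ : Γ) :
    vInd v hv (LiftFam v hv fam) γ = fam γ := by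
  funext x y
  apply propext
  refine vQuot_ind hv (P := fun x => (vInd v hv (LiftFam v hv fam) γ x y ↔ fam γ x y))
    (fun a ha => ?_) x
  refine vQuot_ind hv (P := fun y => (vInd v hv (LiftFam v hv fam) γ (vMk v hv γ a ha) y ↔
    fam γ (vMk v hv γ a ha) y)) (fun b hb => ?_) y
  constructor
  · rintro ⟨a₀, b₀, ha₀, hb₀, ea, eb, hL⟩
    have hvv := lift_val hv hfam hL
    rcases hL with ⟨he1, he2⟩ | ⟨δ, hδ, h1m, h2m, hf⟩
    · subst he1; subst he2
      rw [← ea, ← eb]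
      exact (hfam γ).refl _
    · by_cases hlt : (γ : WithTop Γ) < v b₀
      · have hlta : (γ : WithTop Γ) < v a₀ := lt_of_lt_of_le hlt hvv
        have hx : vMk v hv γ a ha = 0 := by
          rw [← ea]
          exact (vMk_eq_zero_iff hv).mpr hlta
        have hy : vMk v hv γ b hb = 0 := by
          rw [← eb]
          exact (vMk_eq_zero_iff hv).mpr hlt
        rw [hx, hy]
        exact (hfam γ).refl _
      · have hvb₀ : v b₀ = (γ : WithTop Γ) := le_antisymm (not_lt.mp hlt) hb₀
        have hδγ : δ = γ := by
          have h3 : (δ : WithTop Γ) = (γ : WithTop Γ) := by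
            rw [hδ, min_eq_right hvv, hvb₀]
          exact_mod_cast h3
        subst hδγ
        rw [← ea, ← eb]
        exact hf
  · intro hf
    by_cases hlta : (γ : WithTop Γ) < v a
    · have hx : vMk v hv γ a ha = 0 := (vMk_eq_zero_iff hv).mpr hlta
      by_cases hltb : (γ : WithTop Γ) < v b
      · have hy : vMk v hv γ b hb = 0 := (vMk_eq_zero_iff hv).mpr hltb
        refine ⟨0, 0, (vGge v hv γ).zero_mem, (vGge v hv γ).zero_mem, ?_, ?_,
          Or.inl ⟨rfl, rfl⟩⟩
        · rw [hx]; rfl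
        · rw [hy]; rfl
      · refine ⟨0, b, (vGge v hv γ).zero_mem, hb, ?_, rfl, lift_zmin hv hfam b⟩
        rw [hx]; rfl
    · have hva : v a = (γ : WithTop Γ) := le_antisymm (not_lt.mp hlta) ha
      by_cases hltb : (γ : WithTop Γ) < v b
      · exfalso
        have hy : vMk v hv γ b hb = 0 := (vMk_eq_zero_iff hv).mpr hltb
        rw [hy] at hf
        have h2 := (hfam γ).zrig _ hf
        rw [vMk_eq_zero_iff hv, hva] at h2
        exact lt_irrefl _ h2
      · have hvb : v b = (γ : WithTop Γ) := le_antisymm (not_lt.mp hltb) hb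
        refine ⟨a, b, ha, hb, rfl, rfl, Or.inr ⟨γ, ?_, ha, hb, hf⟩⟩
        rw [hva, hvb, min_self]

end PartB2

theorem stmt14 {G : Type u} [AddCommGroup G] {Γ : Type*} [LinearOrder Γ]
    (v : G → WithTop Γ) (hv : IsGroupVal v) :
    (∀ q : G → G → Prop, IsCqo q → ValCompat v q →
      (∀ γ : Γ, IsCqo (vInd v hv q γ)) ∧
      LiftFam v hv (fun γ => vInd v hv q γ) = q ∧
      ((∀ g : G, VType q g) ↔ ∀ (γ : Γ) (x : vQuot v hv γ), VType (vInd v hv q γ) x) ∧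
      ((∀ g : G, OType q g) ↔ ∀ (γ : Γ) (x : vQuot v hv γ), OType (vInd v hv q γ) x)) ∧
    (∀ fam : ∀ γ : Γ, vQuot v hv γ → vQuot v hv γ → Prop,
      (∀ γ : Γ, IsCqo (fam γ)) →
      IsCqo (LiftFam v hv fam) ∧ ValCompat v (LiftFam v hv fam) ∧
        ∀ γ : Γ, vInd v hv (LiftFam v hv fam) γ = fam γ) := by
  constructor
  · intro q hq hcomp
    have hg := good_of_cqo hq
    have hstar : StarProp q := star_of_cqo hq
    exact ⟨fun γ => cqo_of_good (good_ind hv hg hstar hcomp γ),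
      lift_ind_eq hv hg hstar hcomp,
      vtype_iff hv hg hstar hcomp,
      otype_iff hv hg hstar hcomp⟩
  · intro fam hfam
    have hfam' : ∀ γ, GoodQO (fam γ) := fun γ => good_of_cqo (hfam γ)
    exact ⟨cqo_of_good (good_lift hv hfam'),
      fun g h _ h2 => lift_val hv hfam' h2,
      vInd_lift_eq hv hfam'⟩
end

section
/- Let G be an abelian group and v : G → Γ ∪ {∞} a valuation on G. The map sending a group order ≤ on G compatible with v to the family (≤_γ)_{γ∈Γ}, where ≤_γ is the order induced by ≤ on the quotient G^γ/G_γ, is a bijection from the set of v-compatible group orders on G onto the set of families (≤_γ)_{γ∈Γ} of group orders on the quotients G^γ/G_γ. -/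
section Aux15
variable {G : Type u} [AddCommGroup G] {Γ : Type*} [LinearOrder Γ]
variable (v : G → WithTop Γ) (hv : IsGroupVal v)
include hv

lemma aux_vneg (d : G) : v (-d) = v d :=
  le_antisymm (by simpa using hv.le_neg (-d)) (hv.le_neg d)

lemma aux_vadd (d e : G) : min (v d) (v e) ≤ v (d + e) := by
  have h := hv.2 d (-e)
  rw [sub_neg_eq_add, aux_vneg v hv] at h
  exact h

lemma aux_vex {d : G} (hd : d ≠ 0) : ∃ γ : Γ, v d = (γ : WithTop Γ) := by
  have : v d ≠ ⊤ := fun h => hd ((hv.1 d).mp h)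
  obtain ⟨γ, hγ⟩ := WithTop.ne_top_iff_exists.mp this
  exact ⟨γ, hγ.symm⟩

lemma aux_mem_ge {γ : Γ} {g : G} : g ∈ vGge v hv γ ↔ (γ : WithTop Γ) ≤ v g := Iff.rfl
lemma aux_mem_lt {γ : Γ} {g : G} : g ∈ vGlt v hv γ ↔ (γ : WithTop Γ) < v g := Iff.rfl

lemma aux_vMk_eq {γ : Γ} {a b : G} (ha : a ∈ vGge v hv γ) (hb : b ∈ vGge v hv γ) :
    vMk v hv γ a ha = vMk v hv γ b hb ↔ b - a ∈ vGlt v hv γ := by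
  rw [vMk, vMk, QuotientAddGroup.eq, AddSubgroup.mem_addSubgroupOf]
  show (-a + b) ∈ vGlt v hv γ ↔ _
  rw [neg_add_eq_sub]

lemma aux_vMk_add {γ : Γ} {a b : G} (ha : a ∈ vGge v hv γ) (hb : b ∈ vGge v hv γ) :
    vMk v hv γ (a + b) (add_mem ha hb) = vMk v hv γ a ha + vMk v hv γ b hb := rfl

lemma aux_vMk_neg {γ : Γ} {a : G} (ha : a ∈ vGge v hv γ) :
    vMk v hv γ (-a) (neg_mem ha) = - vMk v hv γ a ha := rfl

lemma aux_vMk_zero {γ : Γ} (h : (0:G) ∈ vGge v hv γ) : vMk v hv γ 0 h = 0 := rfl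

lemma aux_rep {γ : Γ} (x : vQuot v hv γ) :
    ∃ (a : G) (ha : a ∈ vGge v hv γ), vMk v hv γ a ha = x := by
  obtain ⟨s, rfl⟩ := QuotientAddGroup.mk_surjective x
  exact ⟨s.1, s.2, rfl⟩


/-- Key convexity lemma: the induced relation does not depend on representatives,
provided the difference is not in `G_γ`. -/
lemma aux_key {q : G → G → Prop} (hq : IsGroupOrder q) (hc : ValCompat v q) {γ : Γ}
    {a b a' b' : G} (hab : q a b) (hnot : b - a ∉ vGlt v hv γ)
    (ha' : a' - a ∈ vGlt v hv γ) (hb' : b' - b ∈ vGlt v hv γ) : q a' b' := by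
  by_contra hcon
  have hba : q b' a' := (hq.1.2.2 a' b').resolve_left hcon
  have h1 : q 0 (b - a) := by
    have := hq.2.2 a b (-a) hab
    simpa [add_neg_cancel, ← sub_eq_add_neg] using this
  have h2 : q (b - a) ((a' - b') + (b - a)) := by
    have h0 : q 0 (a' - b') := by
      have := hq.2.2 b' a' (-b') hba
      simpa [add_neg_cancel, ← sub_eq_add_neg] using this
    have := hq.2.2 0 (a' - b') (b - a) h0
    simpa using this
  have hmem : (a' - b') + (b - a) ∈ vGlt v hv γ := by
    have : (a' - b') + (b - a) = (a' - a) - (b' - b) := by abel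
    rw [this]
    exact sub_mem ha' hb'
  have hle : v ((a' - b') + (b - a)) ≤ v (b - a) := hc _ _ h1 h2
  exact hnot (aux_mem_lt v hv |>.mpr (lt_of_lt_of_le (aux_mem_lt v hv |>.mp hmem) hle))

/-- Part 1: the induced relation on each quotient is a group order. -/
lemma aux_part1 {q : G → G → Prop} (hq : IsGroupOrder q) (hc : ValCompat v q) (γ : Γ) :
    IsGroupOrder (vInd v hv q γ) := by
  refine ⟨⟨?_, ?_, ?_⟩, ?_, ?_⟩
  · -- reflexive
    intro x
    obtain ⟨a, ha, rfl⟩ := aux_rep v hv x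
    exact ⟨a, a, ha, ha, rfl, rfl, hq.1.1 a⟩
  · -- transitive
    rintro x y z ⟨a, b, ha, hb, rfl, rfl, hab⟩ ⟨b', c, hb', hcm, hby, rfl, hbc⟩
    by_cases h1 : b - a ∈ vGlt v hv γ
    · -- x = y
      have hxy : vMk v hv γ a ha = vMk v hv γ b hb := (aux_vMk_eq v hv ha hb).mpr h1
      rw [hxy, ← hby]
      exact ⟨b', c, hb', hcm, rfl, rfl, hbc⟩
    · by_cases h2 : c - b' ∈ vGlt v hv γ
      · have hyz : vMk v hv γ b' hb' = vMk v hv γ c hcm := (aux_vMk_eq v hv hb' hcm).mpr h2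
        exact ⟨a, b, ha, hb, rfl, hby.symm.trans hyz, hab⟩
      · -- use key lemma: q b c from q b' c
        have hbb : b - b' ∈ vGlt v hv γ := (aux_vMk_eq v hv hb' hb).mp hby
        have hbc2 : q b c := aux_key v hv hq hc hbc h2 hbb
          (by simpa using (vGlt v hv γ).zero_mem)
        exact ⟨a, c, ha, hcm, rfl, rfl, hq.1.2.1 hab hbc2⟩
  · -- total
    intro x y
    obtain ⟨a, ha, rfl⟩ := aux_rep v hv x
    obtain ⟨b, hb, rfl⟩ := aux_rep v hv y
    rcases hq.1.2.2 a b with h | h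
    · exact Or.inl ⟨a, b, ha, hb, rfl, rfl, h⟩
    · exact Or.inr ⟨b, a, hb, ha, rfl, rfl, h⟩
  · -- antisymmetric
    rintro x y ⟨a, b, ha, hb, rfl, rfl, hab⟩ ⟨b', a', hb', ha', hby, hax, hba⟩
    by_cases h1 : b - a ∈ vGlt v hv γ
    · exact (aux_vMk_eq v hv ha hb).mpr h1
    · have hq1 : q a' b' := aux_key v hv hq hc hab h1
        ((aux_vMk_eq v hv ha ha').mp hax.symm) ((aux_vMk_eq v hv hb hb').mp hby.symm)
      have heq : a' = b' := hq.2.1 a' b' hq1 hba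
      have h3 : vMk v hv γ a' ha' = vMk v hv γ b' hb' :=
        (aux_vMk_eq v hv ha' hb').mpr (by rw [heq]; simpa using (vGlt v hv γ).zero_mem)
      exact hax.symm.trans (h3.trans hby)
  · -- translation invariant
    rintro x y z ⟨a, b, ha, hb, rfl, rfl, hab⟩
    obtain ⟨c, hcm, rfl⟩ := aux_rep v hv z
    exact ⟨a + c, b + c, add_mem ha hcm, add_mem hb hcm,
      aux_vMk_add v hv ha hcm, aux_vMk_add v hv hb hcm, hq.2.2 a b c hab⟩


lemma aux_not_lt {d : G} {γ : Γ} (hγ : v d = (γ : WithTop Γ)) : d ∉ vGlt v hv γ := by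
  rw [aux_mem_lt v hv, hγ]
  exact lt_irrefl _

/-- For a compatible group order, positivity of `d` with `v d = γ` is read off in `G^γ/G_γ`. -/
lemma aux_pos_iff {q : G → G → Prop} (hq : IsGroupOrder q) (hc : ValCompat v q)
    {d : G} {γ : Γ} (hγ : v d = (γ : WithTop Γ)) :
    q 0 d ↔ vInd v hv q γ 0 (vMk v hv γ d (le_of_eq hγ.symm)) := by
  constructor
  · intro h
    exact ⟨0, d, (vGge v hv γ).zero_mem, le_of_eq hγ.symm, rfl, rfl, h⟩
  · rintro ⟨a, b, ha, hb, hax, hbd, hab⟩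
    have haz : a ∈ vGlt v hv γ := by
      have : vMk v hv γ 0 (vGge v hv γ).zero_mem = vMk v hv γ a ha := hax.symm
      simpa using (aux_vMk_eq v hv _ _).mp this
    have hbd' : d - b ∈ vGlt v hv γ := (aux_vMk_eq v hv hb _).mp hbd
    have hnot : b - a ∉ vGlt v hv γ := by
      intro hmem
      apply aux_not_lt v hv hγ
      have : d = (d - b) + ((b - a) + a) := by abel
      rw [this]
      exact add_mem hbd' (add_mem hmem haz)
    exact aux_key v hv hq hc hab hnot (by simpa using neg_mem haz) hbd'

/-- Part 2: a compatible group order is determined by the induced quotient orders. -/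
lemma aux_part2 {q q' : G → G → Prop} (hq : IsGroupOrder q) (hc : ValCompat v q)
    (hq' : IsGroupOrder q') (hc' : ValCompat v q')
    (h : ∀ γ : Γ, vInd v hv q γ = vInd v hv q' γ) : q = q' := by
  have main : ∀ (r r' : G → G → Prop), IsGroupOrder r → ValCompat v r →
      IsGroupOrder r' → ValCompat v r' →
      (∀ γ : Γ, vInd v hv r γ = vInd v hv r' γ) → ∀ g k, r g k → r' g k := by
    intro r r' hr hcr hr' hcr' hind g k hgk
    by_cases hgkeq : g = k
    · rw [hgkeq]; exact hr'.1.1 k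
    have hd0 : k - g ≠ 0 := sub_ne_zero.mpr (Ne.symm hgkeq)
    obtain ⟨γ, hγ⟩ := aux_vex v hv hd0
    have h0d : r 0 (k - g) := by
      have := hr.2.2 g k (-g) hgk
      simpa [add_neg_cancel, ← sub_eq_add_neg] using this
    have h0d' : r' 0 (k - g) := by
      rw [aux_pos_iff v hv hr' hcr' hγ, ← hind γ]
      exact (aux_pos_iff v hv hr hcr hγ).mp h0d
    have := hr'.2.2 0 (k - g) g h0d'
    simpa [sub_add_cancel] using this
  funext g k
  exact propext ⟨main q q' hq hc hq' hc' h g k,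
    main q' q hq' hc' hq hc (fun γ => (h γ).symm) g k⟩


lemma aux_vMk_congr {γ : Γ} {a b : G} (ha : a ∈ vGge v hv γ) (hb : b ∈ vGge v hv γ)
    (h : a = b) : vMk v hv γ a ha = vMk v hv γ b hb := by subst h; rfl

lemma aux_ne_zero {d : G} {γ : Γ} (hγ : v d = (γ : WithTop Γ)) : d ≠ 0 := by
  rintro rfl
  rw [(hv.1 0).mpr rfl] at hγ
  exact (WithTop.coe_ne_top hγ.symm)

lemma aux_cls_ne {d : G} {γ : Γ} (hγ : v d = (γ : WithTop Γ)) :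
    vMk v hv γ d (le_of_eq hγ.symm) ≠ 0 := by
  intro h
  have h2 : vMk v hv γ d (le_of_eq hγ.symm) = vMk v hv γ 0 (vGge v hv γ).zero_mem := h
  have := (aux_vMk_eq v hv _ _).mp h2
  rw [zero_sub] at this
  exact aux_not_lt v hv hγ (by simpa using neg_mem this)

lemma aux_fam_antisym {γ : Γ} {fam : vQuot v hv γ → vQuot v hv γ → Prop}
    (hfam : IsGroupOrder fam) {x : vQuot v hv γ} (h1 : fam 0 x) (h2 : fam 0 (-x)) :
    x = 0 := by
  have h3 : fam x 0 := by
    have := hfam.2.2 0 (-x) x h2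
    simpa using this
  exact (hfam.2.1 x 0 h3 (by simpa using h1))

lemma aux_vlt_add {d e : G} {γ : Γ} (hγ : v d = (γ : WithTop Γ)) (he : (γ : WithTop Γ) < v e) :
    v (d + e) = (γ : WithTop Γ) := by
  refine le_antisymm ?_ ?_
  · by_contra hlt
    have hlt' : (γ : WithTop Γ) < v (d + e) := not_le.mp hlt
    have h := hv.2 (d + e) e
    rw [add_sub_cancel_right] at h
    rw [hγ] at h
    exact absurd (lt_of_lt_of_le (lt_min hlt' he) h) (lt_irrefl _)
  · have h := aux_vadd v hv d e
    rw [hγ] at h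
    exact le_trans (le_min le_rfl (le_of_lt he)) h

/-- The positivity predicate built from a family of quotient orders. -/
def auxP (fam : ∀ γ : Γ, vQuot v hv γ → vQuot v hv γ → Prop) (d : G) : Prop :=
  d = 0 ∨ ∃ (γ : Γ) (hγ : v d = (γ : WithTop Γ)), fam γ 0 (vMk v hv γ d (le_of_eq hγ.symm))

lemma auxP_iff {fam : ∀ γ : Γ, vQuot v hv γ → vQuot v hv γ → Prop} {d : G} {γ : Γ}
    (hγ : v d = (γ : WithTop Γ)) :
    auxP v hv fam d ↔ fam γ 0 (vMk v hv γ d (le_of_eq hγ.symm)) := by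
  constructor
  · rintro (rfl | ⟨γ', hγ', hf⟩)
    · exact absurd hγ (by rw [(hv.1 0).mpr rfl]; exact fun h => WithTop.coe_ne_top h.symm)
    · have : γ' = γ := WithTop.coe_inj.mp (hγ'.symm.trans hγ)
      subst this
      exact hf
  · intro h
    exact Or.inr ⟨γ, hγ, h⟩

/-- Additivity at equal value. -/
lemma auxP_add_same {fam : ∀ γ : Γ, vQuot v hv γ → vQuot v hv γ → Prop}
    (hfam : ∀ γ : Γ, IsGroupOrder (fam γ)) {d e : G} {γ : Γ}
    (hd : v d = (γ : WithTop Γ)) (he : v e = (γ : WithTop Γ))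
    (hfd : fam γ 0 (vMk v hv γ d (le_of_eq hd.symm)))
    (hfe : fam γ 0 (vMk v hv γ e (le_of_eq he.symm))) :
    ∃ (h : v (d + e) = (γ : WithTop Γ)), fam γ 0 (vMk v hv γ (d + e) (le_of_eq h.symm)) := by
  have hmemd : d ∈ vGge v hv γ := le_of_eq hd.symm
  have hmeme : e ∈ vGge v hv γ := le_of_eq he.symm
  have hge : (γ : WithTop Γ) ≤ v (d + e) := by
    have h := aux_vadd v hv d e
    rw [hd, he, min_self] at h
    exact h
  have hval : v (d + e) = (γ : WithTop Γ) := by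
    refine le_antisymm ?_ hge
    by_contra hlt
    have hmem : d + e ∈ vGlt v hv γ := not_le.mp hlt
    -- then [d] + [e] = 0 in the quotient
    have hzero : vMk v hv γ d hmemd + vMk v hv γ e hmeme = 0 := by
      rw [← aux_vMk_add v hv hmemd hmeme, ← aux_vMk_zero v hv (vGge v hv γ).zero_mem]
      exact (aux_vMk_eq v hv _ _).mpr (by rw [zero_sub]; exact neg_mem hmem)
    have heq : vMk v hv γ e hmeme = -(vMk v hv γ d hmemd) :=
      eq_neg_of_add_eq_zero_left (by rw [add_comm]; exact hzero)
    have := aux_fam_antisym v hv (hfam γ) hfd (heq ▸ hfe)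
    exact aux_cls_ne v hv hd this
  refine ⟨hval, ?_⟩
  have hsum : vMk v hv γ (d + e) (le_of_eq hval.symm)
      = vMk v hv γ d hmemd + vMk v hv γ e hmeme := aux_vMk_add v hv hmemd hmeme
  rw [hsum]
  have h1 : fam γ (vMk v hv γ e hmeme) (vMk v hv γ d hmemd + vMk v hv γ e hmeme) := by
    have := (hfam γ).2.2 0 _ (vMk v hv γ e hmeme) hfd
    simpa using this
  exact (hfam γ).1.2.1 hfe h1

/-- Additivity when the second summand has strictly bigger value. -/
lemma auxP_add_lt {fam : ∀ γ : Γ, vQuot v hv γ → vQuot v hv γ → Prop} {d e : G} {γ : Γ}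
    (hd : v d = (γ : WithTop Γ)) (he : (γ : WithTop Γ) < v e)
    (hfd : fam γ 0 (vMk v hv γ d (le_of_eq hd.symm))) :
    ∃ (h : v (d + e) = (γ : WithTop Γ)), fam γ 0 (vMk v hv γ (d + e) (le_of_eq h.symm)) := by
  have hval := aux_vlt_add v hv hd he
  refine ⟨hval, ?_⟩
  have : vMk v hv γ d (le_of_eq hd.symm) = vMk v hv γ (d + e) (le_of_eq hval.symm) :=
    (aux_vMk_eq v hv _ _).mpr (by simpa using (aux_mem_lt v hv).mpr he)
  rw [← this]
  exact hfd

lemma auxP_add {fam : ∀ γ : Γ, vQuot v hv γ → vQuot v hv γ → Prop}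
    (hfam : ∀ γ : Γ, IsGroupOrder (fam γ)) {d e : G}
    (hd : auxP v hv fam d) (he : auxP v hv fam e) : auxP v hv fam (d + e) := by
  rcases hd with rfl | ⟨α, hα, hfd⟩
  · simpa using he
  rcases he with rfl | ⟨β, hβ, hfe⟩
  · rw [add_zero]; exact Or.inr ⟨α, hα, hfd⟩
  rcases lt_trichotomy α β with hlt | rfl | hlt
  · obtain ⟨hval, hf⟩ := auxP_add_lt v hv hα (hβ ▸ WithTop.coe_lt_coe.mpr hlt) hfd
    exact Or.inr ⟨α, hval, hf⟩
  · obtain ⟨hval, hf⟩ := auxP_add_same v hv hfam hα hβ hfd hfe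
    exact Or.inr ⟨α, hval, hf⟩
  · obtain ⟨hval, hf⟩ := auxP_add_lt v hv hβ (hα ▸ WithTop.coe_lt_coe.mpr hlt) hfe
    rw [add_comm]
    exact Or.inr ⟨β, hval, hf⟩


lemma auxP_total {fam : ∀ γ : Γ, vQuot v hv γ → vQuot v hv γ → Prop}
    (hfam : ∀ γ : Γ, IsGroupOrder (fam γ)) (d : G) :
    auxP v hv fam d ∨ auxP v hv fam (-d) := by
  by_cases hd : d = 0
  · exact Or.inl (Or.inl hd)
  obtain ⟨γ, hγ⟩ := aux_vex v hv hd
  have hγn : v (-d) = (γ : WithTop Γ) := (aux_vneg v hv d).trans hγ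
  have hneg : vMk v hv γ (-d) (le_of_eq hγn.symm) = -(vMk v hv γ d (le_of_eq hγ.symm)) :=
    aux_vMk_neg v hv _
  rcases (hfam γ).1.2.2 0 (vMk v hv γ d (le_of_eq hγ.symm)) with h | h
  · exact Or.inl (Or.inr ⟨γ, hγ, h⟩)
  · refine Or.inr (Or.inr ⟨γ, hγn, ?_⟩)
    rw [hneg]
    have := (hfam γ).2.2 _ 0 (-(vMk v hv γ d (le_of_eq hγ.symm))) h
    simpa using this

lemma auxP_antisym {fam : ∀ γ : Γ, vQuot v hv γ → vQuot v hv γ → Prop}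
    (hfam : ∀ γ : Γ, IsGroupOrder (fam γ)) {d : G}
    (h1 : auxP v hv fam d) (h2 : auxP v hv fam (-d)) : d = 0 := by
  by_contra hd
  obtain ⟨γ, hγ⟩ := aux_vex v hv hd
  have hγn : v (-d) = (γ : WithTop Γ) := (aux_vneg v hv d).trans hγ
  have hf1 := (auxP_iff v hv hγ).mp h1
  have hf2 := (auxP_iff v hv hγn).mp h2
  rw [aux_vMk_neg v hv (le_of_eq hγ.symm)] at hf2
  exact aux_cls_ne v hv hγ (aux_fam_antisym v hv (hfam γ) hf1 hf2)

/-- Part 3: construction of a compatible group order from a family of quotient orders. -/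
lemma aux_part3 (fam : ∀ γ : Γ, vQuot v hv γ → vQuot v hv γ → Prop)
    (hfam : ∀ γ : Γ, IsGroupOrder (fam γ)) :
    ∃ q : G → G → Prop, IsGroupOrder q ∧ ValCompat v q ∧
      ∀ γ : Γ, vInd v hv q γ = fam γ := by
  refine ⟨fun g h => auxP v hv fam (h - g), ⟨⟨?_, ?_, ?_⟩, ?_, ?_⟩, ?_, ?_⟩
  · -- reflexive
    intro g
    exact Or.inl (sub_self g)
  · -- transitive
    intro f g h h1 h2
    have := auxP_add v hv hfam h1 h2
    rwa [show (g - f) + (h - g) = h - f by abel] at this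
  · -- total
    intro g h
    have := auxP_total v hv hfam (h - g)
    rwa [neg_sub] at this
  · -- antisymmetric
    intro a b h1 h2
    rw [show a - b = -(b - a) by abel] at h2
    have := auxP_antisym v hv hfam h1 h2
    exact (sub_eq_zero.mp this).symm
  · -- translation invariance
    intro x y z h
    rwa [show (y + z) - (x + z) = y - x by abel]
  · -- ValCompat
    intro g h h1 h2
    rw [sub_zero] at h1
    by_cases hg0 : g = 0
    · rw [hg0, (hv.1 0).mpr rfl]; exact le_top
    by_cases hgh : h = g
    · rw [hgh]
    by_contra hlt
    have hlt' : v g < v h := not_le.mp hlt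
    obtain ⟨γ, hγ⟩ := aux_vex v hv hg0
    have hγh : (γ : WithTop Γ) < v h := hγ ▸ hlt'
    have hγn : v (-g) = (γ : WithTop Γ) := (aux_vneg v hv g).trans hγ
    have hval : v (h - g) = (γ : WithTop Γ) := by
      have := aux_vlt_add v hv hγn hγh
      rwa [neg_add_eq_sub] at this
    have hf2 := (auxP_iff v hv hval).mp h2
    have hf1 := (auxP_iff v hv hγ).mp h1
    have hcl : vMk v hv γ (h - g) (le_of_eq hval.symm)
        = vMk v hv γ (-g) (le_of_eq hγn.symm) := by
      refine ((aux_vMk_eq v hv _ _).mpr ?_).symm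
      rw [show (h - g) - (-g) = h from by abel]
      exact hγh
    rw [hcl, aux_vMk_neg v hv (le_of_eq hγ.symm)] at hf2
    exact aux_cls_ne v hv hγ (aux_fam_antisym v hv (hfam γ) hf1 hf2)
  · -- the induced orders are the given ones
    intro γ
    funext x y
    apply propext
    constructor
    · rintro ⟨a, b, ha, hb, rfl, rfl, hab⟩
      have hd : b - a ∈ vGge v hv γ := sub_mem hb ha
      by_cases hmem : b - a ∈ vGlt v hv γ
      · rw [(aux_vMk_eq v hv ha hb).mpr hmem]
        exact (hfam γ).1.1 _
      · have hval : v (b - a) = (γ : WithTop Γ) :=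
          le_antisymm (not_lt.mp hmem) hd
        have hf := (auxP_iff v hv hval).mp hab
        have h1 : fam γ (vMk v hv γ a ha)
            (vMk v hv γ (b - a) hd + vMk v hv γ a ha) := by
          have := (hfam γ).2.2 0 _ (vMk v hv γ a ha) hf
          simpa using this
        have h2 : vMk v hv γ (b - a) hd + vMk v hv γ a ha = vMk v hv γ b hb := by
          rw [← aux_vMk_add v hv hd ha]
          exact aux_vMk_congr v hv _ _ (by abel)
        rwa [h2] at h1
    · intro hxy
      obtain ⟨a, ha, rfl⟩ := aux_rep v hv x
      obtain ⟨b, hb, rfl⟩ := aux_rep v hv y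
      have hd : b - a ∈ vGge v hv γ := sub_mem hb ha
      by_cases hmem : b - a ∈ vGlt v hv γ
      · exact ⟨a, a, ha, ha, rfl, (aux_vMk_eq v hv ha hb).mpr hmem, Or.inl (sub_self a)⟩
      · have hval : v (b - a) = (γ : WithTop Γ) := le_antisymm (not_lt.mp hmem) hd
        have hf : fam γ 0 (vMk v hv γ (b - a) hd) := by
          have h1 := (hfam γ).2.2 _ _ (-(vMk v hv γ a ha)) hxy
          rw [add_neg_cancel] at h1
          have h2 : vMk v hv γ b hb + -(vMk v hv γ a ha) = vMk v hv γ (b - a) hd := by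
            rw [← aux_vMk_neg v hv ha, ← aux_vMk_add v hv hb (neg_mem ha)]
            exact aux_vMk_congr v hv _ _ (by abel)
          rwa [h2] at h1
        exact ⟨a, b, ha, hb, rfl, rfl, (auxP_iff v hv hval).mpr hf⟩

end Aux15

theorem stmt15 {G : Type u} [AddCommGroup G] {Γ : Type*} [LinearOrder Γ]
    (v : G → WithTop Γ) (hv : IsGroupVal v) :
    (∀ q : G → G → Prop, IsGroupOrder q → ValCompat v q →
      ∀ γ : Γ, IsGroupOrder (vInd v hv q γ)) ∧
    (∀ q q' : G → G → Prop, IsGroupOrder q → ValCompat v q →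
      IsGroupOrder q' → ValCompat v q' →
      (∀ γ : Γ, vInd v hv q γ = vInd v hv q' γ) → q = q') ∧
    (∀ fam : ∀ γ : Γ, vQuot v hv γ → vQuot v hv γ → Prop,
      (∀ γ : Γ, IsGroupOrder (fam γ)) →
      ∃ q : G → G → Prop, IsGroupOrder q ∧ ValCompat v q ∧
        ∀ γ : Γ, vInd v hv q γ = fam γ) :=
  ⟨fun _ hq hc γ => aux_part1 v hv hq hc γ,
   fun _ _ hq hc hq' hc' h => aux_part2 v hv hq hc hq' hc' h,
   fun fam hfam => aux_part3 v hv fam hfam⟩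
end

section
/- Let ≾ be an o-type C-quasi-order on an abelian group G and let H be a ≾-convex subgroup of G. Then the q.o. induced by ≾ on G/H is an o-type C-q.o., and the group order Ω(induced q.o. on G/H) coincides with the order induced on G/H by the group order Ω(≾). -/
/-- The group order associated to an o-type C-q.o.: `a ≤ b ↔ b - a ∈ {g | -g ≾ g}`. -/
def OmegaOrd {G : Type u} [AddCommGroup G] (q : G → G → Prop) : G → G → Prop :=
  fun a b => q (a - b) (b - a)

section AuxCqo
universe u
variable {G : Type u} [AddCommGroup G]

/-- First-order axioms characterizing C-quasi-orders. -/
def CqoAx (q : G → G → Prop) : Prop :=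
  (∀ a b, q a b ∨ q b a) ∧
  (∀ a b c, q a b → q b c → q a c) ∧
  (∀ g, q g 0 → g = 0) ∧
  (∀ a b, q (a - b) (-b) → q a b)

namespace CqoAx
variable {q : G → G → Prop} (hx : CqoAx q)
include hx

lemma tot (a b : G) : q a b ∨ q b a := hx.1 a b
lemma trans {a b c : G} (h1 : q a b) (h2 : q b c) : q a c := hx.2.1 a b c h1 h2
lemma zero {g : G} (h : q g 0) : g = 0 := hx.2.2.1 g h
lemma refl (a : G) : q a a := (hx.1 a a).elim id id
lemma D {a b : G} (h : q (a - b) (-b)) : q a b := hx.2.2.2 a b h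

lemma D' {a b : G} (h : q a b) : q (a - b) (-b) := by
  apply hx.D
  have e1 : a - b - -b = a := by abel
  have e2 : -(-b) = b := by abel
  rw [e1, e2]; exact h

lemma zero_le (b : G) : q 0 b := by
  apply hx.D
  have e : (0 : G) - b = -b := by abel
  rw [e]; exact hx.refl _

/-- KEY: if `¬ q u w` then `-u ∼ w - u`. -/
lemma key {u w : G} (h : ¬ q u w) : q (-u) (w - u) ∧ q (w - u) (-u) := by
  constructor
  · apply hx.D
    have e1 : -u - (w - u) = -w := by abel
    have e2 : -(w - u) = u - w := by abel
    rw [e1, e2]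
    rcases hx.tot (-w) (u - w) with h' | h'
    · exact h'
    · exact absurd (hx.D (by simpa [sub_neg_eq_add] using h' : q (u - w) (-w))) h
  · have hwu : q w u := (hx.tot u w).resolve_left h
    have := hx.D' hwu
    simpa using this

/-- Translation (star) property. -/
lemma star {a b : G} (d : G) (h : q a b) (hc : ¬ (q b (-d) ∧ q (-d) b)) :
    q (a + d) (b + d) := by
  apply hx.D
  have e1 : a + d - (b + d) = a - b := by abel
  rw [e1]
  have hab : q (a - b) (-b) := hx.D' h
  by_cases huw : q (-b) (-(b + d))
  · exact hx.trans hab huw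
  · exfalso
    have hk := hx.key huw
    have e2 : -(-b) = b := by abel
    have e3 : -(b + d) - -b = -d := by abel
    rw [e2, e3] at hk
    exact hc hk

end CqoAx

lemma cqoAx_of_isCqo {q : G → G → Prop} (hq : IsCqo q) : CqoAx q := by
  obtain ⟨C, ⟨h1, h2, h3, h4, h5⟩, hC⟩ := hq
  refine ⟨fun a b => ?_, fun a b c hab hbc => ?_, fun g hg => ?_, fun a b hab => ?_⟩
  · by_contra hcon
    push_neg at hcon
    obtain ⟨ha, hb⟩ := hcon
    rw [hC, not_not] at ha hb
    exact h2 _ _ _ ha hb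
  · rw [hC] at hab hbc ⊢
    intro hac
    rcases h3 b a c 0 hac with h | h
    · exact hbc h
    · exact hab h
  · rw [hC] at hg
    by_contra hne
    exact hg (h4 g 0 hne)
  · rw [hC] at hab ⊢
    intro hC0
    apply hab
    have t1 := h1 a b 0 hC0
    have t2 := h5 a 0 b (-b) t1
    have e1 : -b + a = a - b := by abel
    have e2 : -b + 0 = -b := by abel
    have e3 : -b + b = (0 : G) := by abel
    rwa [e1, e2, e3] at t2

lemma isCqo_of_cqoAx {q : G → G → Prop} (hx : CqoAx q) : IsCqo q := by
  refine ⟨fun x y z => ¬ q (x - z) (y - z), ⟨?_, ?_, ?_, ?_, ?_⟩, fun g h => by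
    simp [sub_zero, not_not]⟩
  · intro x y z h hq'
    apply h
    have := hx.D' hq'
    have e1 : x - y - (z - y) = x - z := by abel
    have e2 : -(z - y) = y - z := by abel
    rwa [e1, e2] at this
  · intro x y z h h'
    rcases hx.tot (x - z) (y - z) with h0 | h0
    · exact h h0
    · exact h' h0
  · intro w x y z h
    by_contra hc
    push_neg at hc
    exact h (hx.trans hc.2 hc.1)
  · intro x y hxy h
    rw [sub_self] at h
    exact hxy (sub_eq_zero.mp (hx.zero h))
  · intro f g h x hC hq'
    apply hC
    have e1 : x + f - (x + h) = f - h := by abel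
    have e2 : x + g - (x + h) = g - h := by abel
    rwa [e1, e2] at hq'

end AuxCqo

section AuxQuot
universe u
variable {G : Type u} [AddCommGroup G] {q : G → G → Prop} {H : AddSubgroup G}

lemma memH (hx : CqoAx q) (hH : QOConvex q (H : Set G)) {a h : G}
    (hh : h ∈ H) (hq : q a h) : a ∈ H :=
  hH a 0 h H.zero_mem hh (hx.zero_le a) hq

lemma indRel_axioms (hx : CqoAx q) (hH : QOConvex q (H : Set G)) :
    CqoAx (IndRel q H) := by
  refine ⟨fun x y => ?_, fun x y z hxy hyz => ?_, fun x hx0 => ?_, fun x y hxy => ?_⟩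
  · obtain ⟨a, ha⟩ := QuotientAddGroup.mk_surjective x
    obtain ⟨b, hb⟩ := QuotientAddGroup.mk_surjective y
    rcases hx.tot a b with h | h
    · exact Or.inl ⟨a, b, ha, hb, h⟩
    · exact Or.inr ⟨b, a, hb, ha, h⟩
  · obtain ⟨a, b, hax, hby, hab⟩ := hxy
    obtain ⟨b', c, hb'y, hcz, hb'c⟩ := hyz
    have hd : b' - b ∈ H := QuotientAddGroup.eq_iff_sub_mem.mp (hb'y.trans hby.symm)
    set d := b' - b with hdd
    by_cases hbd : q b (-d) ∧ q (-d) b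
    · -- a ∈ H, so x = 0
      have haH : a ∈ H := memH hx hH (H.neg_mem hd) (hx.trans hab hbd.1)
      refine ⟨0, c, ?_, hcz, hx.zero_le c⟩
      rw [QuotientAddGroup.mk_zero, ← hax, eq_comm, QuotientAddGroup.eq_zero_iff]
      exact haH
    · have h1 : q (a + d) (b + d) := hx.star d hab hbd
      have e : b + d = b' := by rw [hdd]; abel
      rw [e] at h1
      refine ⟨a + d, c, ?_, hcz, hx.trans h1 hb'c⟩
      rw [QuotientAddGroup.mk_add, hax]
      have : (d : G ⧸ H) = 0 := (QuotientAddGroup.eq_zero_iff d).mpr hd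
      rw [this, add_zero]
  · obtain ⟨a, b, hax, hb0, hab⟩ := hx0
    have hbH : b ∈ H := (QuotientAddGroup.eq_zero_iff b).mp hb0
    have haH : a ∈ H := memH hx hH hbH hab
    rw [← hax, QuotientAddGroup.eq_zero_iff]
    exact haH
  · obtain ⟨u, w, hu, hw, huw⟩ := hxy
    refine ⟨u - w, -w, ?_, ?_, ?_⟩
    · rw [QuotientAddGroup.mk_sub, hu, hw]; abel
    · rw [QuotientAddGroup.mk_neg, hw]; abel
    · apply hx.D
      have e1 : u - w - -w = u := by abel
      have e2 : -(-w) = w := by abel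
      rw [e1, e2]; exact huw

lemma indRel_otype (hx : CqoAx q) (ho : ∀ g : G, OType q g)
    (hH : QOConvex q (H : Set G)) (x : G ⧸ H)
    (he : QOEquiv (IndRel q H) x (-x)) : x = 0 := by
  obtain ⟨hq1, hq2⟩ := he
  obtain ⟨a, b, hax, hbnx, hab⟩ := hq1
  obtain ⟨a', b', ha'nx, hb'x, ha'b'⟩ := hq2
  -- it suffices to show a ∈ H
  suffices haH : a ∈ H by
    rw [← hax, QuotientAddGroup.eq_zero_iff]; exact haH
  -- b = -a + h₁ with h₁ ∈ H
  have hh1 : b + a ∈ H := by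
    have : (b : G ⧸ H) = ((-a : G) : G ⧸ H) := by
      rw [hbnx, QuotientAddGroup.mk_neg, hax]
    simpa [sub_neg_eq_add] using QuotientAddGroup.eq_iff_sub_mem.mp this
  set h₁ : G := b + a with hh1d
  have hbeq : b = -a + h₁ := by rw [hh1d]; abel
  -- a' = -a + k, k ∈ H
  have hk : a' + a ∈ H := by
    have : (a' : G ⧸ H) = ((-a : G) : G ⧸ H) := by
      rw [ha'nx, QuotientAddGroup.mk_neg, hax]
    simpa [sub_neg_eq_add] using QuotientAddGroup.eq_iff_sub_mem.mp this
  set k : G := a' + a with hkd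
  have ha'eq : a' = -a + k := by rw [hkd]; abel
  -- b' = a + m, m ∈ H
  have hm : b' - a ∈ H := QuotientAddGroup.eq_iff_sub_mem.mp (hb'x.trans hax.symm)
  set m : G := b' - a with hmd
  have hb'eq : b' = a + m := by rw [hmd]; abel
  rw [hbeq] at hab          -- hab : q a (-a + h₁)
  rw [ha'eq, hb'eq] at ha'b' -- ha'b' : q (-a + k) (a + m)
  by_cases hP : q (-a) a
  · -- use (i) : q a (-a + h₁)
    by_cases hQ : q (-a + h₁) (-a)
    · -- a ∼ -a, so a = 0
      have : q a (-a) := hx.trans hab hQ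
      rcases ho a with hno | h0
      · exact absurd ⟨this, hP⟩ hno
      · rw [h0]; exact H.zero_mem
    · have hk2 := hx.key hQ
      have e1 : -(-a + h₁) = a - h₁ := by abel
      have e2 : -a - (-a + h₁) = -h₁ := by abel
      rw [e1, e2] at hk2
      have h5 : a - h₁ ∈ H := memH hx hH (H.neg_mem hh1) hk2.1
      have h6 := H.add_mem h5 hh1
      rwa [show a - h₁ + h₁ = a from by abel] at h6
  · -- case ¬ q (-a) a : use (ii),(iii)
    -- S1: from ha'b' with d := -m
    by_cases hc1 : q (a + m) (-(-m)) ∧ q (-(-m)) (a + m)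
    · rw [neg_neg] at hc1
      have h5 : a + m ∈ H := memH hx hH hm hc1.1
      have h6 := H.sub_mem h5 hm
      rwa [show a + m - m = a from by abel] at h6
    · have hii : q (-a + (k - m)) a := by
        have := hx.star (-m) ha'b' hc1
        have e1 : -a + k + -m = -a + (k - m) := by abel
        have e2 : a + m + -m = a := by abel
        rwa [e1, e2] at this
      set k' : G := k - m with hk'd
      have hk'H : k' ∈ H := H.sub_mem hk hm
      -- S2: from hii with d := -k'
      by_cases hc2 : q a (-(-k')) ∧ q (-(-k')) a
      · rw [neg_neg] at hc2
        exact memH hx hH hk'H hc2.1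
      · have hiii : q (-a) (a - k') := by
          have := hx.star (-k') hii hc2
          have e1 : -a + k' + -k' = -a := by abel
          have e2 : a + -k' = a - k' := by abel
          rwa [e1, e2] at this
        by_cases hQ : q (a - k') a
        · exact absurd (hx.trans hiii hQ) hP
        · have hk2 := hx.key hQ
          have e1 : -(a - k') = k' - a := by abel
          have e2 : a - (a - k') = k' := by abel
          rw [e1, e2] at hk2
          have h5 : k' - a ∈ H := memH hx hH hk'H hk2.1
          have h6 := H.sub_mem hk'H h5
          rwa [show k' - (k' - a) = a from by abel] at h6

lemma indRel_omega (hx : CqoAx q)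
    (hH : QOConvex q (H : Set G)) (x y : G ⧸ H) :
    OmegaOrd (IndRel q H) x y ↔ IndRel (OmegaOrd q) H x y := by
  constructor
  · rintro ⟨u, w, hu, hw, huw⟩
    -- w = -u + h
    have hh : w + u ∈ H := by
      have : (w : G ⧸ H) = ((-u : G) : G ⧸ H) := by
        rw [hw, QuotientAddGroup.mk_neg, hu]; abel
      simpa [sub_neg_eq_add] using QuotientAddGroup.eq_iff_sub_mem.mp this
    set h : G := w + u with hhd
    have hweq : w = -u + h := by rw [hhd]; abel
    rw [hweq] at huw
    -- find g ≡ u mod H with q g (-g)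
    have hg : ∃ g : G, (g : G ⧸ H) = x - y ∧ q g (-g) := by
      by_cases h0 : q u (-u)
      · exact ⟨u, hu, h0⟩
      · have hmem0 : u ∈ H → ∃ g : G, (g : G ⧸ H) = x - y ∧ q g (-g) := by
          intro huH
          refine ⟨0, ?_, by simpa using hx.refl (0 : G)⟩
          rw [QuotientAddGroup.mk_zero, ← hu, eq_comm, QuotientAddGroup.eq_zero_iff]
          exact huH
        by_cases hc1 : q (-u + h) (-(-h)) ∧ q (-(-h)) (-u + h)
        · rw [neg_neg] at hc1
          have h5 : -u + h ∈ H := memH hx hH hh hc1.1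
          apply hmem0
          have h6 := H.sub_mem hh h5
          rwa [show h - (-u + h) = u from by abel] at h6
        · have h1 : q (u - h) (-u) := by
            have := hx.star (-h) huw hc1
            have e1 : u + -h = u - h := by abel
            have e2 : -u + h + -h = -u := by abel
            rwa [e1, e2] at this
          set g : G := u - h with hgd
          by_cases hg0 : q g (-g)
          · refine ⟨g, ?_, hg0⟩
            rw [hgd, QuotientAddGroup.mk_sub, (QuotientAddGroup.eq_zero_iff h).mpr hh, sub_zero, hu]
          · -- h1 : q g (-g - h) after rewriting
            have h1' : q g (-g - h) := by
              have e : -u = -g - h := by rw [hgd]; abel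
              rwa [e] at h1
            by_cases hc2 : q (-g - h) (-h) ∧ q (-h) (-g - h)
            · have h5 : -g - h ∈ H := memH hx hH (H.neg_mem hh) hc2.1
              apply hmem0
              have h6 := H.neg_mem h5
              rwa [show -(-g - h) = u from by rw [hgd]; abel] at h6
            · have h2 : q (g + h) (-g) := by
                have h6 := hx.star h h1' hc2
                have e1 : -g - h + h = -g := by abel
                rwa [e1] at h6
              -- q (-g - h) (g + h) : this is q (-u) u
              have h3 : q (-g - h) (g + h) := by
                have hnu : q (-u) u := (hx.tot u (-u)).resolve_left h0
                have e1 : -u = -g - h := by rw [hgd]; abel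
                have e2 : u = g + h := by rw [hgd]; abel
                rwa [e1, e2] at hnu
              exact absurd (hx.trans (hx.trans h1' h3) h2) hg0
    obtain ⟨g, hgxy, hgq⟩ := hg
    obtain ⟨a, ha⟩ := QuotientAddGroup.mk_surjective x
    refine ⟨a, a - g, ha, ?_, ?_⟩
    · rw [QuotientAddGroup.mk_sub, ha, hgxy]; abel
    · show q (a - (a - g)) (a - g - a)
      have e1 : a - (a - g) = g := by abel
      have e2 : a - g - a = -g := by abel
      rw [e1, e2]; exact hgq
  · rintro ⟨a, b, hax, hby, hab⟩
    refine ⟨a - b, b - a, ?_, ?_, hab⟩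
    · rw [QuotientAddGroup.mk_sub, hax, hby]
    · show ((b - a : G) : G ⧸ H) = y - x
      rw [QuotientAddGroup.mk_sub, hax, hby]

end AuxQuot

theorem stmt16 {G : Type u} [AddCommGroup G] (q : G → G → Prop)
    (hq : IsCqo q) (ho : ∀ g : G, OType q g)
    (H : AddSubgroup G) (hH : QOConvex q (H : Set G)) :
    IsCqo (IndRel q H) ∧ (∀ x : G ⧸ H, OType (IndRel q H) x) ∧
      ∀ x y : G ⧸ H, OmegaOrd (IndRel q H) x y ↔ IndRel (OmegaOrd q) H x y := by
  have hx : CqoAx q := cqoAx_of_isCqo hq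
  refine ⟨isCqo_of_cqoAx (indRel_axioms hx hH), fun x => ?_, indRel_omega hx hH⟩
  by_cases he : QOEquiv (IndRel q H) x (-x)
  · exact Or.inr (indRel_otype hx ho hH x he)
  · exact Or.inl he
end
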